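/- Let H, G be groups with action φ: G → Aut(H), and define the subgroups L_n of H by L₁ = H, K_n = ⟨φ(g)(h)h⁻¹ : g ∈ Γ_{n−1}(G), h ∈ H⟩, H_n = ⟨φ(g)(h)h⁻¹ : g ∈ G, h ∈ L_{n−1}⟩, L_n = ⟨K_n, H_n, [H, L_{n−1}]⟩. Then for each n, the lower central series term of the semidirect product satisfies Γ_n(H ⋊_φ G) = L_n ⋊_φ Γ_n(G), where φ induces an action of Γ_n(G) on L_n. -/

import Mathlib

/-!
`Lseries φ n ⋊ Γ_n(G)` is a descending central series of `H ⋊[φ] G`: the `Lseries φ n` are normal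
and `φ`-stable, and the three kinds of generators of `Lseries φ (n + 1)` are exactly what is needed
to kill, modulo `Lseries φ (n + 1)`, the left component of a commutator `⁅x, y⁆` with
`x ∈ Lseries φ n ⋊ Γ_n(G)`. Hence it contains the lower central series. Conversely, each generator
of `Lseries φ (n + 1)` is, inside the semidirect product, a commutator `⁅inr g, inl h⁆` or
`⁅inl h, inl a⁆` with one entry in `Γ_n(H ⋊[φ] G)`.
-/

/-- The subgroups `L_n` of `H` from Theorem 1.2 of the paper (zero-based indexing, so
`Lseries φ (n-1)` is the paper's `L_n`). -/
def Lseries {G H : Type*} [Group G] [Group H] (φ : G →* MulAut H) : ℕ → Subgroup H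
  | 0 => ⊤
  | n + 1 =>
      Subgroup.closure {x : H | ∃ g ∈ (⊤ : Subgroup G).lowerCentralSeries n, ∃ h : H, x = φ g h * h⁻¹} ⊔
      Subgroup.closure {x : H | ∃ g : G, ∃ h ∈ Lseries φ n, x = φ g h * h⁻¹} ⊔
      ⁅(⊤ : Subgroup H), Lseries φ n⁆

open Subgroup SemidirectProduct
open scoped commutatorElement

namespace Subgroup

theorem map_top_lowerCentralSeries_le {G K : Type*} [Group G] [Group K] (f : G →* K)
    (n : ℕ) :
    ((⊤ : Subgroup G).lowerCentralSeries n).map f ≤ (⊤ : Subgroup K).lowerCentralSeries n := by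
  rw [map_lowerCentralSeries]
  exact lowerCentralSeries_mono n le_top

theorem commutator_mem_lowerCentralSeries_succ_of_mem_right {G : Type*} [Group G]
    {n : ℕ} (x : G) {y : G} (hy : y ∈ (⊤ : Subgroup G).lowerCentralSeries n) :
    ⁅x, y⁆ ∈ (⊤ : Subgroup G).lowerCentralSeries (n + 1) := by
  rw [lowerCentralSeries_succ, commutator_comm]
  exact commutator_mem_commutator (mem_top x) hy

variable {N G : Type*} [Group N] [Group G] (φ : G →* MulAut N)

def semidirectProduct (L : Subgroup N) (K : Subgroup G) (hL : ∀ g ∈ K, ∀ n ∈ L, φ g n ∈ L) :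
    Subgroup (N ⋊[φ] G) where
  carrier := {x | x.left ∈ L ∧ x.right ∈ K}
  one_mem' := ⟨L.one_mem, K.one_mem⟩
  mul_mem' := fun ⟨ha, ha'⟩ ⟨hb, hb'⟩ => ⟨L.mul_mem ha (hL _ ha' _ hb), K.mul_mem ha' hb'⟩
  inv_mem' := fun ⟨ha, ha'⟩ => ⟨hL _ (K.inv_mem ha') _ (L.inv_mem ha), K.inv_mem ha'⟩

variable {φ} {L : Subgroup N} {K : Subgroup G} {hL : ∀ g ∈ K, ∀ n ∈ L, φ g n ∈ L}

theorem map_inl_sup_map_inr : L.map inl ⊔ K.map inr = L.semidirectProduct φ K hL := by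
  refine le_antisymm (sup_le ?_ ?_) fun x ⟨hx, hx'⟩ => ?_
  · rintro _ ⟨n, hn, rfl⟩
    exact ⟨hn, K.one_mem⟩
  · rintro _ ⟨g, hg, rfl⟩
    exact ⟨L.one_mem, hg⟩
  · rw [← inl_left_mul_inr_right x]
    exact mul_mem (mem_sup_left (mem_map_of_mem _ hx)) (mem_sup_right (mem_map_of_mem _ hx'))

end Subgroup

namespace SemidirectProduct

variable {N G : Type*} [Group N] [Group G] (φ : G →* MulAut N)

theorem commutator_inr_inl (g : G) (n : N) :
    ⁅(inr g : N ⋊[φ] G), (inl n : N ⋊[φ] G)⁆ = inl (φ g n * n⁻¹) := by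
  simp [commutatorElement_def, inl_aut]

theorem commutator_left (x y : N ⋊[φ] G) :
    ⁅x, y⁆.left = x.left * φ x.right y.left * φ (x.right * y.right * x.right⁻¹) x.left⁻¹ *
      φ ⁅x.right, y.right⁆ y.left⁻¹ := by
  simp [commutatorElement_def, mul_assoc]

theorem commutator_right (x y : N ⋊[φ] G) : ⁅x, y⁆.right = ⁅x.right, y.right⁆ := rfl

end SemidirectProduct

namespace Lseries

variable {G H : Type*} [Group G] [Group H] {φ : G →* MulAut H} {n : ℕ}

theorem apply_mul_inv_mem_succ_of_mem_lowerCentralSeries {g : G}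
    (hg : g ∈ (⊤ : Subgroup G).lowerCentralSeries n) (h : H) :
    φ g h * h⁻¹ ∈ Lseries φ (n + 1) :=
  mem_sup_left (mem_sup_left (subset_closure ⟨g, hg, h, rfl⟩))

theorem apply_mul_inv_mem_succ (g : G) {h : H} (hh : h ∈ Lseries φ n) :
    φ g h * h⁻¹ ∈ Lseries φ (n + 1) :=
  mem_sup_left (mem_sup_right (subset_closure ⟨g, h, hh, rfl⟩))

theorem commutator_mem_succ (h : H) {a : H} (ha : a ∈ Lseries φ n) :
    ⁅h, a⁆ ∈ Lseries φ (n + 1) :=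
  mem_sup_right (commutator_mem_commutator (mem_top h) ha)

theorem succ_le (n : ℕ) : Lseries φ (n + 1) ≤ Lseries φ n := by
  induction n with
  | zero => exact le_top
  | succ n ih =>
    refine sup_le_sup (sup_le_sup (Subgroup.closure_mono ?_) (Subgroup.closure_mono ?_))
      (commutator_mono le_rfl ih)
    · rintro x ⟨g, hg, h, rfl⟩
      exact ⟨g, Subgroup.lowerCentralSeries_antitone ⊤ n.le_succ hg, h, rfl⟩
    · rintro x ⟨g, h, hh, rfl⟩
      exact ⟨g, h, ih hh, rfl⟩

theorem apply_mem (g : G) {h : H} (hh : h ∈ Lseries φ n) : φ g h ∈ Lseries φ n := by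
  simpa using mul_mem (succ_le n (apply_mul_inv_mem_succ g hh)) hh

instance normal (n : ℕ) : (Lseries φ n).Normal where
  conj_mem a ha h := by
    simpa [commutatorElement_def] using mul_mem (succ_le n (commutator_mem_succ h ha)) ha

theorem mul_apply_mul_apply_inv_mul_apply_inv_mem_succ {a c : H} {g g' g'' : G}
    (ha : a ∈ Lseries φ n) (hg : g ∈ (⊤ : Subgroup G).lowerCentralSeries n)
    (hg'' : g'' ∈ (⊤ : Subgroup G).lowerCentralSeries n) :
    a * φ g c * φ g' a⁻¹ * φ g'' c⁻¹ ∈ Lseries φ (n + 1) := by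
  have h₁ : φ g c * c⁻¹ ∈ Lseries φ (n + 1) :=
    apply_mul_inv_mem_succ_of_mem_lowerCentralSeries hg c
  have h₂ : φ g' a⁻¹ * a ∈ Lseries φ (n + 1) := by
    simpa using apply_mul_inv_mem_succ g' (inv_mem ha)
  have h₃ : ⁅a, c⁆ ∈ Lseries φ (n + 1) := by
    simpa [commutatorElement_inv] using inv_mem (commutator_mem_succ c ha)
  have h₄ : φ g'' c⁻¹ * c ∈ Lseries φ (n + 1) := by
    simpa using apply_mul_inv_mem_succ_of_mem_lowerCentralSeries hg'' c⁻¹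
  -- Modulo the normal subgroup `Lseries φ (n + 1)`, `φ g` and `φ g''` fix `c`, `φ g'` fixes `a`,
  -- and `a` commutes with `c`.
  have key : a * φ g c * φ g' a⁻¹ * φ g'' c⁻¹ =
      a * (φ g c * c⁻¹) * a⁻¹ * ((a * c) * (φ g' a⁻¹ * a) * (a * c)⁻¹) * ⁅a, c⁆ *
        (c * (φ g'' c⁻¹ * c) * c⁻¹) := by
    group
  rw [key]
  have hN : (Lseries φ (n + 1)).Normal := inferInstance
  exact mul_mem (mul_mem (mul_mem (hN.conj_mem _ h₁ a) (hN.conj_mem _ h₂ _)) h₃)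
    (hN.conj_mem _ h₄ c)

variable (φ)

theorem isDescendingCentralSeries_semidirectProduct :
    Subgroup.IsDescendingCentralSeries fun n =>
      (Lseries φ n).semidirectProduct φ ((⊤ : Subgroup G).lowerCentralSeries n)
        fun g _ _ hh => apply_mem g hh := by
  refine ⟨eq_top_iff.mpr fun _ _ => ⟨mem_top _, mem_top _⟩, fun x n ⟨hx, hx'⟩ y => ⟨?_, ?_⟩⟩
  · have hcomm : ⁅x.right, y.right⁆ ∈ (⊤ : Subgroup G).lowerCentralSeries n :=
      Subgroup.lowerCentralSeries_antitone ⊤ n.le_succ (commutator_mem_commutator hx' (mem_top _))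
    rw [commutator_left]
    exact mul_apply_mul_apply_inv_mul_apply_inv_mem_succ hx hx' hcomm
  · rw [commutator_right]
    exact commutator_mem_commutator hx' (mem_top y.right)

theorem map_inl_le_lowerCentralSeries (n : ℕ) :
    (Lseries φ n).map inl ≤ (⊤ : Subgroup (H ⋊[φ] G)).lowerCentralSeries n := by
  induction n with
  | zero => exact le_top
  | succ n ih =>
    rw [map_le_iff_le_comap] at ih ⊢
    refine sup_le (sup_le ?_ ?_) ?_
    · rw [closure_le]
      rintro _ ⟨g, hg, h, rfl⟩
      have hg : inr g ∈ (⊤ : Subgroup (H ⋊[φ] G)).lowerCentralSeries n :=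
        map_top_lowerCentralSeries_le inr n (mem_map_of_mem inr hg)
      rw [SetLike.mem_coe, mem_comap, ← commutator_inr_inl]
      exact commutator_mem_commutator hg (mem_top _)
    · rw [closure_le]
      rintro _ ⟨g, h, hh, rfl⟩
      rw [SetLike.mem_coe, mem_comap, ← commutator_inr_inl]
      exact commutator_mem_lowerCentralSeries_succ_of_mem_right _ (ih hh)
    · rw [commutator_le]
      intro h _ a ha
      rw [mem_comap, map_commutatorElement]
      exact commutator_mem_lowerCentralSeries_succ_of_mem_right _ (ih ha)

end Lseries

/-- Theorem 1.2(1): `Γ_n(H ⋊_φ G) = L_n ⋊_φ Γ_n(G)`, where `φ` induces an action of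
`Γ_n(G)` on `L_n` (both sides viewed as subgroups of the semidirect product, the right-hand
side being generated by the images of `L_n` and `Γ_n(G)`). -/
theorem lowerCentralSeries_semidirectProduct {G H : Type*} [Group G] [Group H]
    (φ : G →* MulAut H) :
    ∀ n : ℕ,
      (∀ g ∈ (⊤ : Subgroup G).lowerCentralSeries n, ∀ h ∈ Lseries φ n, φ g h ∈ Lseries φ n) ∧
      (⊤ : Subgroup (H ⋊[φ] G)).lowerCentralSeries n =
        (Lseries φ n).map SemidirectProduct.inl ⊔
          ((⊤ : Subgroup G).lowerCentralSeries n).map SemidirectProduct.inr := by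
  intro n
  have hL : ∀ g ∈ (⊤ : Subgroup G).lowerCentralSeries n, ∀ h ∈ Lseries φ n, φ g h ∈ Lseries φ n :=
    fun g _ _ hh => Lseries.apply_mem g hh
  refine ⟨hL, le_antisymm ?_ ?_⟩
  · rw [map_inl_sup_map_inr (hL := hL)]
    exact Subgroup.descending_central_series_ge_lower _
      (Lseries.isDescendingCentralSeries_semidirectProduct φ) n
  · exact sup_le (Lseries.map_inl_le_lowerCentralSeries φ n) (map_top_lowerCentralSeries_le inr n)
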